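/- For the 2-component modified CH spectral matrices F = [[1/2, zm],[zn, -1/2]] and G = [[1/(4z²) + qr/2, q/(2z) + zmqr],[-r/(2z) + znqr, -1/(4z²) - qr/2]], the zero-curvature equation F_t - G_x + [F,G] = 0 holds identically in z ≠ 0 if and only if m_t = (mqr)_x and n_t = (nqr)_x, together with m = q - q_x and n = -r - r_x. -/

import Mathlib

noncomputable def pdx (F : ℝ → ℝ → ℝ) : ℝ → ℝ → ℝ :=
  fun x t => deriv (fun x' => F x' t) x

noncomputable def pdt (F : ℝ → ℝ → ℝ) : ℝ → ℝ → ℝ :=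
  fun x t => deriv (fun t' => F x t') t

noncomputable def Fmat (m n : ℝ → ℝ → ℝ) (z x t : ℝ) : Matrix (Fin 2) (Fin 2) ℝ :=
  !![1/2, z * m x t; z * n x t, -1/2]

noncomputable def Gmat (q r m n : ℝ → ℝ → ℝ) (z x t : ℝ) : Matrix (Fin 2) (Fin 2) ℝ :=
  !![1/(4*z^2) + q x t * r x t / 2, q x t/(2*z) + z * m x t * q x t * r x t;
     -(r x t)/(2*z) + z * n x t * q x t * r x t, -1/(4*z^2) - q x t * r x t / 2]

lemma hasfd_x (f : ℝ → ℝ → ℝ) (hf : ContDiff ℝ (⊤ : ℕ∞) (fun p : ℝ × ℝ => f p.1 p.2)) (x t : ℝ) :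
    HasDerivAt (fun x' => f x' t) ((fderiv ℝ (fun p : ℝ × ℝ => f p.1 p.2) (x, t)) (1, 0)) x := by
  have h1 := ((hf.differentiable (by simp) (x, t)).hasFDerivAt).comp x
    (hasFDerivAt_prodMk_left (𝕜 := ℝ) x t)
  simpa [Function.comp_def] using h1.hasDerivAt

lemma hasfd_t (f : ℝ → ℝ → ℝ) (hf : ContDiff ℝ (⊤ : ℕ∞) (fun p : ℝ × ℝ => f p.1 p.2)) (x t : ℝ) :
    HasDerivAt (fun t' => f x t') ((fderiv ℝ (fun p : ℝ × ℝ => f p.1 p.2) (x, t)) (0, 1)) t := by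
  have h1 := ((hf.differentiable (by simp) (x, t)).hasFDerivAt).comp t
    (hasFDerivAt_prodMk_right x t)
  simpa [Function.comp_def] using h1.hasDerivAt

lemma diff_x (f : ℝ → ℝ → ℝ) (hf : ContDiff ℝ (⊤ : ℕ∞) (fun p : ℝ × ℝ => f p.1 p.2)) (x t : ℝ) :
    DifferentiableAt ℝ (fun x' => f x' t) x := (hasfd_x f hf x t).differentiableAt

lemma diff_t (f : ℝ → ℝ → ℝ) (hf : ContDiff ℝ (⊤ : ℕ∞) (fun p : ℝ × ℝ => f p.1 p.2)) (x t : ℝ) :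
    DifferentiableAt ℝ (fun t' => f x t') t := (hasfd_t f hf x t).differentiableAt

lemma contDiff_pdx (f : ℝ → ℝ → ℝ) (hf : ContDiff ℝ (⊤ : ℕ∞) (fun p : ℝ × ℝ => f p.1 p.2)) :
    ContDiff ℝ (⊤ : ℕ∞) (fun p : ℝ × ℝ => pdx f p.1 p.2) := by
  have h : (fun p : ℝ × ℝ => pdx f p.1 p.2)
      = fun p : ℝ × ℝ => (fderiv ℝ (fun p : ℝ × ℝ => f p.1 p.2) p) (1, 0) := by
    funext p
    exact (hasfd_x f hf p.1 p.2).deriv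
  rw [h]
  exact (hf.fderiv_right (by simp)).clm_apply contDiff_const

lemma key (q r m n : ℝ → ℝ → ℝ)
    (hq : ContDiff ℝ (⊤ : ℕ∞) (fun p : ℝ × ℝ => q p.1 p.2))
    (hr : ContDiff ℝ (⊤ : ℕ∞) (fun p : ℝ × ℝ => r p.1 p.2))
    (hm : ∀ x t, m x t = q x t - pdx q x t)
    (hn : ∀ x t, n x t = -(r x t) - pdx r x t)
    (z : ℝ) (hz : z ≠ 0) (x t : ℝ) :
    (Matrix.of fun i j => pdt (fun x' t' => Fmat m n z x' t' i j) x t)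
        - (Matrix.of fun i j => pdx (fun x' t' => Gmat q r m n z x' t' i j) x t)
        + (Fmat m n z x t * Gmat q r m n z x t - Gmat q r m n z x t * Fmat m n z x t)
    = !![0, z * (pdt m x t - pdx (fun x' t' => m x' t' * q x' t' * r x' t') x t);
         z * (pdt n x t - pdx (fun x' t' => n x' t' * q x' t' * r x' t') x t), 0] := by
  have hm2 : ContDiff ℝ (⊤ : ℕ∞) (fun p : ℝ × ℝ => m p.1 p.2) := by
    have e : (fun p : ℝ × ℝ => m p.1 p.2) = fun p : ℝ × ℝ => q p.1 p.2 - pdx q p.1 p.2 :=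
      funext fun p => hm p.1 p.2
    rw [e]; exact hq.sub (contDiff_pdx q hq)
  have hn2 : ContDiff ℝ (⊤ : ℕ∞) (fun p : ℝ × ℝ => n p.1 p.2) := by
    have e : (fun p : ℝ × ℝ => n p.1 p.2) = fun p : ℝ × ℝ => -(r p.1 p.2) - pdx r p.1 p.2 :=
      funext fun p => hn p.1 p.2
    rw [e]; exact hr.neg.sub (contDiff_pdx r hr)
  have hdq := diff_x q hq x t
  have hdr := diff_x r hr x t
  have hdm := diff_x m hm2 x t
  have hdn := diff_x n hn2 x t
  have hdmt := diff_t m hm2 x t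
  have hdnt := diff_t n hn2 x t
  have hdmqr : DifferentiableAt ℝ (fun x' => m x' t * q x' t * r x' t) x := (hdm.mul hdq).mul hdr
  have hdnqr : DifferentiableAt ℝ (fun x' => n x' t * q x' t * r x' t) x := (hdn.mul hdq).mul hdr
  have hF00 : pdt (fun x' t' => (1:ℝ)/2) x t = 0 := deriv_const _ _
  have hF11 : pdt (fun x' t' => (-1:ℝ)/2) x t = 0 := deriv_const _ _
  have hG00 : pdx (fun x' t' => 1/(4*z^2) + q x' t' * r x' t' / 2) x t
      = (pdx q x t * r x t + q x t * pdx r x t) / 2 := by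
    show deriv (fun x' => 1/(4*z^2) + q x' t * r x' t / 2) x = _
    rw [deriv_const_add, deriv_div_const, deriv_fun_mul hdq hdr]; rfl
  have hG11 : pdx (fun x' t' => -1/(4*z^2) - q x' t' * r x' t' / 2) x t
      = -((pdx q x t * r x t + q x t * pdx r x t) / 2) := by
    show deriv (fun x' => -1/(4*z^2) - q x' t * r x' t / 2) x = _
    rw [deriv_const_sub, deriv_div_const, deriv_fun_mul hdq hdr]; rfl
  have hG01 : pdx (fun x' t' => q x' t'/(2*z) + z * m x' t' * q x' t' * r x' t') x t
      = pdx q x t/(2*z) + z * pdx (fun x' t' => m x' t' * q x' t' * r x' t') x t := by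
    show deriv (fun x' => q x' t/(2*z) + z * m x' t * q x' t * r x' t) x = _
    have e : (fun x' => q x' t/(2*z) + z * m x' t * q x' t * r x' t)
        = fun x' => q x' t/(2*z) + z * (m x' t * q x' t * r x' t) := by funext x'; ring
    rw [e, deriv_fun_add (hdq.div_const _) (hdmqr.const_mul z), deriv_div_const,
      deriv_const_mul z hdmqr]; rfl
  have hG10 : pdx (fun x' t' => -(r x' t')/(2*z) + z * n x' t' * q x' t' * r x' t') x t
      = -(pdx r x t)/(2*z) + z * pdx (fun x' t' => n x' t' * q x' t' * r x' t') x t := by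
    show deriv (fun x' => -(r x' t)/(2*z) + z * n x' t * q x' t * r x' t) x = _
    have e : (fun x' => -(r x' t)/(2*z) + z * n x' t * q x' t * r x' t)
        = fun x' => (-(r x' t))/(2*z) + z * (n x' t * q x' t * r x' t) := by funext x'; ring
    rw [e, deriv_fun_add (f := fun x' => (-(r x' t))/(2*z)) (hdr.neg.div_const _) (hdnqr.const_mul z), deriv_div_const, deriv.fun_neg,
      deriv_const_mul z hdnqr]; rfl
  have hF01 : pdt (fun x' t' => z * m x' t') x t = z * pdt m x t := by
    show deriv (fun t' => z * m x t') t = _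
    rw [deriv_const_mul z hdmt]; rfl
  have hF10 : pdt (fun x' t' => z * n x' t') x t = z * pdt n x t := by
    show deriv (fun t' => z * n x t') t = _
    rw [deriv_const_mul z hdnt]; rfl
  ext i j
  fin_cases i <;> fin_cases j <;>
    simp only [Matrix.add_apply, Matrix.sub_apply, Matrix.of_apply, Matrix.mul_apply,
      Fin.sum_univ_two, Fmat, Gmat, Matrix.cons_val', Matrix.cons_val_zero, Matrix.cons_val_one,
      Matrix.head_cons, Matrix.head_fin_const, Matrix.empty_val', Fin.mk_zero, Fin.mk_one,
      Matrix.cons_val_fin_one, Fin.isValue]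
  · rw [hF00, hG00, hm x t, hn x t]
    field_simp
    ring
  · rw [hF01, hG01, hm x t]
    field_simp
    ring
  · rw [hF10, hG10, hn x t]
    field_simp
    ring
  · rw [hF11, hG11, hm x t, hn x t]
    field_simp
    ring

theorem stmt_3 (q r m n : ℝ → ℝ → ℝ)
    (hq : ContDiff ℝ (⊤ : ℕ∞) (fun p : ℝ × ℝ => q p.1 p.2))
    (hr : ContDiff ℝ (⊤ : ℕ∞) (fun p : ℝ × ℝ => r p.1 p.2))
    (hm : ∀ x t, m x t = q x t - pdx q x t)
    (hn : ∀ x t, n x t = -(r x t) - pdx r x t) :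
    (∀ z : ℝ, z ≠ 0 → ∀ x t : ℝ,
      (Matrix.of fun i j => pdt (fun x' t' => Fmat m n z x' t' i j) x t)
        - (Matrix.of fun i j => pdx (fun x' t' => Gmat q r m n z x' t' i j) x t)
        + (Fmat m n z x t * Gmat q r m n z x t - Gmat q r m n z x t * Fmat m n z x t) = 0)
    ↔ (∀ x t : ℝ,
        pdt m x t = pdx (fun x' t' => m x' t' * q x' t' * r x' t') x t
        ∧ pdt n x t = pdx (fun x' t' => n x' t' * q x' t' * r x' t') x t) := by
  constructor
  · intro h x t
    have h1 := h 1 one_ne_zero x t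
    rw [key q r m n hq hr hm hn 1 one_ne_zero x t] at h1
    constructor
    · have e := congrFun (congrFun h1 0) 1
      simp at e
      linarith [e]
    · have e := congrFun (congrFun h1 1) 0
      simp at e
      linarith [e]
  · intro h z hz x t
    rw [key q r m n hq hr hm hn z hz x t]
    have h1 := (h x t).1
    have h2 := (h x t).2
    ext i j
    fin_cases i <;> fin_cases j <;>
      simp [h1, h2]
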